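/- A ReLU-activated encoder–decoder with s layers of encoder blocks and t layers of encoder–decoder blocks is a spline of degree 3^{t+s} + 3^t − 3^s. Precisely, let ε_s : ℝ^{n×p} → ℝ^{n''×p} be an s-layer ReLU encoder, and define recursively τ_0(X,Y) = Y and τ_i(X,Y) = φ_i(γ_i(ε_s(X), β_i(τ_{i−1}(X,Y)))) for i = 1,…,t, where each β_i is a multihead ReLU masked attention module, each γ_i a multihead ReLU encoder–decoder attention module, and each φ_i a ReLU feed-forward neural network applied columnwise; then τ_t : ℝ^{n×p} × ℝ^{r×p} → ℝ^{n'×p} is a spline of degree 3^{t+s} + 3^t − 3^s in the joint variables (X,Y). -/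
import Mathlib


noncomputable section

open Matrix

/-- The rectified linear unit. -/
def relu (x : ℝ) : ℝ := max x 0

/-- Entrywise ReLU of a matrix. -/
def matRelu {a b : ℕ} (M : Matrix (Fin a) (Fin b) ℝ) : Matrix (Fin a) (Fin b) ℝ :=
  Matrix.of fun i j => relu (M i j)

/-- A continuous function `f : ℝ^ι → ℝ` is a (polynomial) spline of degree `k` if there are
polynomials `π_1, …, π_b`, each of total degree at most `k`, such that on every (nonempty) cell
of the induced semialgebraic sign partition, `f` agrees with a polynomial of degree at most `k`. -/
def IsSpline (ι : Type) [Fintype ι] (k : ℕ) (f : (ι → ℝ) → ℝ) : Prop :=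
  Continuous f ∧
  ∃ (b : ℕ) (π : Fin b → MvPolynomial ι ℝ),
    (∀ i, (π i).totalDegree ≤ k) ∧
    ∀ θ : Fin b → SignType,
      ∃ ξ : MvPolynomial ι ℝ, ξ.totalDegree ≤ k ∧
        ∀ x : ι → ℝ, (∀ i, SignType.sign (MvPolynomial.eval x (π i)) = θ i) →
          f x = MvPolynomial.eval x ξ

/-- A matrix-variate, matrix-valued function is a spline of degree `k` if each coordinate
function, regarded as a function of the entries of the input matrix, is a spline of degree `k`. -/
def IsMatrixSpline {n p m q : ℕ} (k : ℕ)
    (f : Matrix (Fin n) (Fin p) ℝ → Matrix (Fin m) (Fin q) ℝ) : Prop :=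
  ∀ (i : Fin m) (j : Fin q),
    IsSpline (Fin n × Fin p) k (fun x => f (Matrix.of fun a b => x (a, b)) i j)

/-- A function of a pair of matrices is a spline of degree `k` (jointly in the entries of both
arguments) if each coordinate function, regarded as a function of the `np + rp'` entries of the
two input matrices, is a spline of degree `k`. -/
def IsPairSpline {n p r p' m q : ℕ} (k : ℕ)
    (f : Matrix (Fin n) (Fin p) ℝ → Matrix (Fin r) (Fin p') ℝ → Matrix (Fin m) (Fin q) ℝ) :
    Prop :=
  ∀ (i : Fin m) (j : Fin q),
    IsSpline ((Fin n × Fin p) ⊕ (Fin r × Fin p')) k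
      (fun x => f (Matrix.of fun a b => x (Sum.inl (a, b)))
                  (Matrix.of fun a b => x (Sum.inr (a, b))) i j)

/-- The ReLU-activated attention module `α(X) = (A_V X + B_V) · ReLU((A_K X + B_K)ᵀ (A_Q X + B_Q))`. -/
def attention {n p d m : ℕ}
    (AQ AK : Matrix (Fin d) (Fin n) ℝ) (AV : Matrix (Fin m) (Fin n) ℝ)
    (BQ BK : Matrix (Fin d) (Fin p) ℝ) (BV : Matrix (Fin m) (Fin p) ℝ)
    (X : Matrix (Fin n) (Fin p) ℝ) : Matrix (Fin m) (Fin p) ℝ :=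
  (AV * X + BV) * matRelu ((AK * X + BK)ᵀ * (AQ * X + BQ))

/-- The ReLU-activated masked attention module: the score matrix
`(A_K X + B_K)ᵀ (A_Q X + B_Q)` is ReLU'd on its upper-triangular part (`i ≤ j`) and the
strictly lower-triangular entries (`i > j`) are set to `0`, before multiplying by the values. -/
def maskedAttention {n p d m : ℕ}
    (AQ AK : Matrix (Fin d) (Fin n) ℝ) (AV : Matrix (Fin m) (Fin n) ℝ)
    (BQ BK : Matrix (Fin d) (Fin p) ℝ) (BV : Matrix (Fin m) (Fin p) ℝ)
    (X : Matrix (Fin n) (Fin p) ℝ) : Matrix (Fin m) (Fin p) ℝ :=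
  (AV * X + BV) *
    Matrix.of (fun i j : Fin p =>
      if i ≤ j then relu (((AK * X + BK)ᵀ * (AQ * X + BQ)) i j) else 0)

/-- The ReLU-activated encoder–decoder attention module: keys and values come from `X`, queries
come from `Y`: `γ(X,Y) = (A_V X + B_V) · ReLU((A_K X + B_K)ᵀ (A_Q Y + B_Q))`. -/
def encDecAttention {n r p d m : ℕ}
    (AQ : Matrix (Fin d) (Fin r) ℝ) (AK : Matrix (Fin d) (Fin n) ℝ)
    (AV : Matrix (Fin m) (Fin n) ℝ)
    (BQ BK : Matrix (Fin d) (Fin p) ℝ) (BV : Matrix (Fin m) (Fin p) ℝ)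
    (X : Matrix (Fin n) (Fin p) ℝ) (Y : Matrix (Fin r) (Fin p) ℝ) :
    Matrix (Fin m) (Fin p) ℝ :=
  (AV * X + BV) * matRelu ((AK * X + BK)ᵀ * (AQ * Y + BQ))

/-- An `h`-headed ReLU attention module: `h` attention modules stacked vertically, giving a map
`ℝ^{n×p} → ℝ^{hm×p}`. -/
def multiheadAttention {n p d m h : ℕ}
    (AQ AK : Fin h → Matrix (Fin d) (Fin n) ℝ) (AV : Fin h → Matrix (Fin m) (Fin n) ℝ)
    (BQ BK : Fin h → Matrix (Fin d) (Fin p) ℝ) (BV : Fin h → Matrix (Fin m) (Fin p) ℝ)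
    (X : Matrix (Fin n) (Fin p) ℝ) : Matrix (Fin (h * m)) (Fin p) ℝ :=
  Matrix.of fun i j =>
    attention (AQ (finProdFinEquiv.symm i).1) (AK (finProdFinEquiv.symm i).1)
      (AV (finProdFinEquiv.symm i).1) (BQ (finProdFinEquiv.symm i).1)
      (BK (finProdFinEquiv.symm i).1) (BV (finProdFinEquiv.symm i).1) X
      (finProdFinEquiv.symm i).2 j

/-- An `h`-headed ReLU masked attention module: `h` masked attention modules stacked
vertically, giving a map `ℝ^{n×p} → ℝ^{hm×p}`. -/
def multiheadMaskedAttention {n p d m h : ℕ}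
    (AQ AK : Fin h → Matrix (Fin d) (Fin n) ℝ) (AV : Fin h → Matrix (Fin m) (Fin n) ℝ)
    (BQ BK : Fin h → Matrix (Fin d) (Fin p) ℝ) (BV : Fin h → Matrix (Fin m) (Fin p) ℝ)
    (X : Matrix (Fin n) (Fin p) ℝ) : Matrix (Fin (h * m)) (Fin p) ℝ :=
  Matrix.of fun i j =>
    maskedAttention (AQ (finProdFinEquiv.symm i).1) (AK (finProdFinEquiv.symm i).1)
      (AV (finProdFinEquiv.symm i).1) (BQ (finProdFinEquiv.symm i).1)
      (BK (finProdFinEquiv.symm i).1) (BV (finProdFinEquiv.symm i).1) X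
      (finProdFinEquiv.symm i).2 j

/-- An `h`-headed ReLU encoder–decoder attention module: `h` encoder–decoder attention modules
stacked vertically (keys and values from `X`, queries from `Z`). -/
def multiheadEncDecAttention {n r p d m h : ℕ}
    (AQ : Fin h → Matrix (Fin d) (Fin r) ℝ) (AK : Fin h → Matrix (Fin d) (Fin n) ℝ)
    (AV : Fin h → Matrix (Fin m) (Fin n) ℝ)
    (BQ BK : Fin h → Matrix (Fin d) (Fin p) ℝ) (BV : Fin h → Matrix (Fin m) (Fin p) ℝ)
    (X : Matrix (Fin n) (Fin p) ℝ) (Z : Matrix (Fin r) (Fin p) ℝ) :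
    Matrix (Fin (h * m)) (Fin p) ℝ :=
  Matrix.of fun i j =>
    encDecAttention (AQ (finProdFinEquiv.symm i).1) (AK (finProdFinEquiv.symm i).1)
      (AV (finProdFinEquiv.symm i).1) (BQ (finProdFinEquiv.symm i).1)
      (BK (finProdFinEquiv.symm i).1) (BV (finProdFinEquiv.symm i).1) X Z
      (finProdFinEquiv.symm i).2 j

/-- ReLU feed-forward neural networks `φ(x) = A_{l+1} σ_l A_l ⋯ σ_1 A_1 x + b_{l+1}`, where
`σ_i(x) = ReLU(x + b_i)` coordinatewise: the base case is an affine map, and each additional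
layer precomposes with `x ↦ ReLU(A x + b)`. -/
inductive IsNN : ∀ {a b : ℕ}, ((Fin a → ℝ) → (Fin b → ℝ)) → Prop
  | affine {a b : ℕ} (A : Matrix (Fin b) (Fin a) ℝ) (c : Fin b → ℝ) :
      IsNN (fun x => A.mulVec x + c)
  | layer {a b c : ℕ} (A : Matrix (Fin b) (Fin a) ℝ) (v : Fin b → ℝ)
      {g : (Fin b → ℝ) → (Fin c → ℝ)} (hg : IsNN g) :
      IsNN (fun x => g (fun i => relu (A.mulVec x i + v i)))

/-- Apply a map `φ : ℝ^a → ℝ^c` columnwise to a matrix `X ∈ ℝ^{a×p}`. -/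
def colwise {a c p : ℕ} (φ : (Fin a → ℝ) → (Fin c → ℝ))
    (X : Matrix (Fin a) (Fin p) ℝ) : Matrix (Fin c) (Fin p) ℝ :=
  Matrix.of fun i j => φ (fun r => X r j) i

/-- An encoder block: a multihead ReLU attention module followed by a ReLU feed-forward
neural network applied columnwise. -/
def IsEncoderBlock {n r p : ℕ}
    (f : Matrix (Fin n) (Fin p) ℝ → Matrix (Fin r) (Fin p) ℝ) : Prop :=
  ∃ (d m h : ℕ)
    (AQ AK : Fin h → Matrix (Fin d) (Fin n) ℝ) (AV : Fin h → Matrix (Fin m) (Fin n) ℝ)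
    (BQ BK : Fin h → Matrix (Fin d) (Fin p) ℝ) (BV : Fin h → Matrix (Fin m) (Fin p) ℝ)
    (φ : (Fin (h * m) → ℝ) → (Fin r → ℝ)), IsNN φ ∧
      f = fun X => colwise φ (multiheadAttention AQ AK AV BQ BK BV X)

/-- A `t`-layer encoder: the composition of `t` encoder blocks. -/
inductive IsEncoder {p : ℕ} : ∀ {n r : ℕ}, ℕ →
    (Matrix (Fin n) (Fin p) ℝ → Matrix (Fin r) (Fin p) ℝ) → Prop
  | block {n r : ℕ} (f : Matrix (Fin n) (Fin p) ℝ → Matrix (Fin r) (Fin p) ℝ)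
      (hf : IsEncoderBlock f) : IsEncoder 1 f
  | comp {n s r : ℕ} (t : ℕ) (f : Matrix (Fin n) (Fin p) ℝ → Matrix (Fin s) (Fin p) ℝ)
      (g : Matrix (Fin s) (Fin p) ℝ → Matrix (Fin r) (Fin p) ℝ)
      (hf : IsEncoderBlock f) (hg : IsEncoder t g) : IsEncoder (t + 1) (g ∘ f)

/-- The tower of encoder–decoder blocks over an encoder `ε`: `τ_0(X,Y) = Y` and
`τ_i(X,Y) = φ_i(γ_i(ε(X), β_i(τ_{i−1}(X,Y))))`, where each `β_i` is a multihead ReLU masked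
attention module, each `γ_i` a multihead ReLU encoder–decoder attention module, and each `φ_i`
a ReLU feed-forward neural network applied columnwise. -/
inductive IsEncDecChain {n p e r : ℕ}
    (ε : Matrix (Fin n) (Fin p) ℝ → Matrix (Fin e) (Fin p) ℝ) :
    ∀ {q : ℕ}, ℕ →
      (Matrix (Fin n) (Fin p) ℝ → Matrix (Fin r) (Fin p) ℝ → Matrix (Fin q) (Fin p) ℝ) → Prop
  | zero : IsEncDecChain ε 0 (fun _ Y => Y)
  | succ {q d₁ m₁ h₁ d₂ m₂ h₂ n' : ℕ} (t : ℕ)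
      (τ : Matrix (Fin n) (Fin p) ℝ → Matrix (Fin r) (Fin p) ℝ → Matrix (Fin q) (Fin p) ℝ)
      (hτ : IsEncDecChain ε t τ)
      (AQ₁ AK₁ : Fin h₁ → Matrix (Fin d₁) (Fin q) ℝ)
      (AV₁ : Fin h₁ → Matrix (Fin m₁) (Fin q) ℝ)
      (BQ₁ BK₁ : Fin h₁ → Matrix (Fin d₁) (Fin p) ℝ)
      (BV₁ : Fin h₁ → Matrix (Fin m₁) (Fin p) ℝ)
      (AQ₂ : Fin h₂ → Matrix (Fin d₂) (Fin (h₁ * m₁)) ℝ)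
      (AK₂ : Fin h₂ → Matrix (Fin d₂) (Fin e) ℝ)
      (AV₂ : Fin h₂ → Matrix (Fin m₂) (Fin e) ℝ)
      (BQ₂ BK₂ : Fin h₂ → Matrix (Fin d₂) (Fin p) ℝ)
      (BV₂ : Fin h₂ → Matrix (Fin m₂) (Fin p) ℝ)
      (φ : (Fin (h₂ * m₂) → ℝ) → (Fin n' → ℝ)) (hφ : IsNN φ) :
      IsEncDecChain ε (t + 1) (fun X Y =>
        colwise φ (multiheadEncDecAttention AQ₂ AK₂ AV₂ BQ₂ BK₂ BV₂ (ε X)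
          (multiheadMaskedAttention AQ₁ AK₁ AV₁ BQ₁ BK₁ BV₁ (τ X Y))))

section SplineAux

open MvPolynomial

variable {ι : Type} [Fintype ι]

/-- Flexible-index version of `IsSpline`. -/
def IsSpline' (ι : Type) [Fintype ι] (k : ℕ) (f : (ι → ℝ) → ℝ) : Prop :=
  Continuous f ∧
  ∃ (B : Type) (_ : Fintype B) (π : B → MvPolynomial ι ℝ),
    (∀ i, (π i).totalDegree ≤ k) ∧
    ∀ θ : B → SignType,
      ∃ ξ : MvPolynomial ι ℝ, ξ.totalDegree ≤ k ∧
        ∀ x : ι → ℝ, (∀ i, SignType.sign (MvPolynomial.eval x (π i)) = θ i) →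
          f x = MvPolynomial.eval x ξ

lemma isSpline'_iff {k : ℕ} {f : (ι → ℝ) → ℝ} : IsSpline' ι k f ↔ IsSpline ι k f := by
  constructor
  · rintro ⟨hc, B, _, π, hdeg, H⟩
    refine ⟨hc, Fintype.card B, fun i => π ((Fintype.equivFin B).symm i), fun i => hdeg _, ?_⟩
    intro θ
    obtain ⟨ξ, hξ, hx⟩ := H (fun b => θ (Fintype.equivFin B b))
    refine ⟨ξ, hξ, fun x hsign => hx x fun b => ?_⟩
    simpa using hsign (Fintype.equivFin B b)
  · rintro ⟨hc, b, π, hdeg, H⟩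
    exact ⟨hc, Fin b, inferInstance, π, hdeg, H⟩

lemma IsSpline.mono {k k' : ℕ} {f : (ι → ℝ) → ℝ} (h : IsSpline ι k f) (hk : k ≤ k') :
    IsSpline ι k' f := by
  obtain ⟨hc, b, π, hd, H⟩ := h
  refine ⟨hc, b, π, fun i => (hd i).trans hk, fun θ => ?_⟩
  obtain ⟨ξ, hξ, hx⟩ := H θ
  exact ⟨ξ, hξ.trans hk, hx⟩

lemma isSpline_of_poly {k : ℕ} (ξ : MvPolynomial ι ℝ) (hξ : ξ.totalDegree ≤ k) :
    IsSpline ι k (fun x => MvPolynomial.eval x ξ) :=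
  ⟨MvPolynomial.continuous_eval ξ, 0, Fin.elim0, fun i => i.elim0, fun _ => ⟨ξ, hξ, fun _ _ => rfl⟩⟩

lemma isSpline_const (k : ℕ) (c : ℝ) : IsSpline ι k (fun _ => c) := by
  simpa using isSpline_of_poly (k := k) (MvPolynomial.C c) (by simp)

lemma isSpline_coord (k : ℕ) (hk : 1 ≤ k) (i : ι) : IsSpline ι k (fun x => x i) := by
  simpa using isSpline_of_poly (k := k) (MvPolynomial.X i) (by simpa using hk)

lemma IsSpline.add {k : ℕ} {f g : (ι → ℝ) → ℝ} (hf : IsSpline ι k f) (hg : IsSpline ι k g) :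
    IsSpline ι k (fun x => f x + g x) := by
  rw [← isSpline'_iff] at hf hg ⊢
  obtain ⟨hcf, B₁, _, π₁, hd₁, H₁⟩ := hf
  obtain ⟨hcg, B₂, _, π₂, hd₂, H₂⟩ := hg
  refine ⟨hcf.add hcg, B₁ ⊕ B₂, inferInstance, Sum.elim π₁ π₂, ?_, ?_⟩
  · rintro (i | i)
    exacts [hd₁ i, hd₂ i]
  · intro θ
    obtain ⟨ξ₁, hξ₁, hx₁⟩ := H₁ (θ ∘ Sum.inl)
    obtain ⟨ξ₂, hξ₂, hx₂⟩ := H₂ (θ ∘ Sum.inr)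
    refine ⟨ξ₁ + ξ₂, (totalDegree_add _ _).trans (max_le hξ₁ hξ₂), fun x hs => ?_⟩
    simp [hx₁ x fun i => hs (Sum.inl i), hx₂ x fun i => hs (Sum.inr i)]

lemma IsSpline.mul {k₁ k₂ : ℕ} {f g : (ι → ℝ) → ℝ} (hf : IsSpline ι k₁ f)
    (hg : IsSpline ι k₂ g) : IsSpline ι (k₁ + k₂) (fun x => f x * g x) := by
  rw [← isSpline'_iff] at hf hg ⊢
  obtain ⟨hcf, B₁, _, π₁, hd₁, H₁⟩ := hf
  obtain ⟨hcg, B₂, _, π₂, hd₂, H₂⟩ := hg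
  refine ⟨hcf.mul hcg, B₁ ⊕ B₂, inferInstance, Sum.elim π₁ π₂, ?_, ?_⟩
  · rintro (i | i)
    exacts [(hd₁ i).trans (Nat.le_add_right _ _), (hd₂ i).trans (Nat.le_add_left _ _)]
  · intro θ
    obtain ⟨ξ₁, hξ₁, hx₁⟩ := H₁ (θ ∘ Sum.inl)
    obtain ⟨ξ₂, hξ₂, hx₂⟩ := H₂ (θ ∘ Sum.inr)
    refine ⟨ξ₁ * ξ₂, (totalDegree_mul _ _).trans (Nat.add_le_add hξ₁ hξ₂), fun x hs => ?_⟩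
    simp [hx₁ x fun i => hs (Sum.inl i), hx₂ x fun i => hs (Sum.inr i)]

lemma IsSpline.const_mul {k : ℕ} {f : (ι → ℝ) → ℝ} (c : ℝ) (hf : IsSpline ι k f) :
    IsSpline ι k (fun x => c * f x) := by
  simpa using (isSpline_const 0 c).mul hf

lemma IsSpline.relu {k : ℕ} {f : (ι → ℝ) → ℝ} (hf : IsSpline ι k f) :
    IsSpline ι k (fun x => relu (f x)) := by
  classical
  rw [← isSpline'_iff] at hf ⊢
  obtain ⟨hc, B, _, π, hd, H⟩ := hf
  choose Ξ hΞd hΞ using H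
  refine ⟨(hc.max continuous_const : Continuous fun x => max (f x) 0),
    B ⊕ (B → SignType), inferInstance, Sum.elim π Ξ, ?_, ?_⟩
  · rintro (i | θ)
    exacts [hd i, hΞd θ]
  · intro θ'
    refine ⟨if θ' (Sum.inr (fun b => θ' (Sum.inl b))) = SignType.pos
        then Ξ (fun b => θ' (Sum.inl b)) else 0, ?_, fun x hs => ?_⟩
    · split
      · exact hΞd _
      · simp
    · have hfx : f x = MvPolynomial.eval x (Ξ (fun b => θ' (Sum.inl b))) :=
        hΞ _ x (fun i => hs (Sum.inl i))
      have hsx : SignType.sign (MvPolynomial.eval x (Ξ (fun b => θ' (Sum.inl b))))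
          = θ' (Sum.inr (fun b => θ' (Sum.inl b))) := hs (Sum.inr _)
      show _root_.relu (f x) = _
      rcases hθp : θ' (Sum.inr (fun b => θ' (Sum.inl b))) with _ | _ | _
      · -- zero
        rw [hθp] at hsx
        have h0 : MvPolynomial.eval x (Ξ (fun b => θ' (Sum.inl b))) = 0 :=
          sign_eq_zero_iff.mp hsx
        simp [_root_.relu, hθp, hfx, h0]
      · -- neg
        rw [hθp] at hsx
        have h0 : MvPolynomial.eval x (Ξ (fun b => θ' (Sum.inl b))) < 0 :=
          sign_eq_neg_one_iff.mp hsx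
        simp [_root_.relu, hθp, hfx, max_eq_right h0.le]
      · -- pos
        rw [hθp] at hsx
        have h0 : 0 < MvPolynomial.eval x (Ξ (fun b => θ' (Sum.inl b))) :=
          sign_eq_one_iff.mp hsx
        simp [_root_.relu, hθp, hfx, max_eq_left h0.le]

lemma isSpline_sum {k : ℕ} {κ : Type*} (s : Finset κ) (f : κ → (ι → ℝ) → ℝ)
    (h : ∀ m ∈ s, IsSpline ι k (f m)) :
    IsSpline ι k (fun x => ∑ m ∈ s, f m x) := by
  classical
  induction s using Finset.induction_on with
  | empty => simpa using isSpline_const (ι := ι) k 0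
  | @insert a s ha ih =>
    simp only [Finset.sum_insert ha]
    exact (h a (Finset.mem_insert_self a s)).add
      (ih fun m hm => h m (Finset.mem_insert_of_mem hm))

end SplineAux

section MatrixSplineAux

variable {ι : Type} [Fintype ι]

/-- A matrix-valued function on `ℝ^ι` is an entrywise spline of degree `k`. -/
def MS {a c : ℕ} (ι : Type) [Fintype ι] (k : ℕ)
    (G : (ι → ℝ) → Matrix (Fin a) (Fin c) ℝ) : Prop :=
  ∀ i j, IsSpline ι k (fun x => G x i j)

lemma MS.mono {a c k k' : ℕ} {G : (ι → ℝ) → Matrix (Fin a) (Fin c) ℝ}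
    (h : MS ι k G) (hk : k ≤ k') : MS ι k' G := fun i j => (h i j).mono hk

lemma MS.matMul {a b c k₁ k₂ : ℕ} {F : (ι → ℝ) → Matrix (Fin a) (Fin b) ℝ}
    {G : (ι → ℝ) → Matrix (Fin b) (Fin c) ℝ} (hF : MS ι k₁ F) (hG : MS ι k₂ G) :
    MS ι (k₁ + k₂) (fun x => F x * G x) := by
  intro i j
  have he : (fun x => (F x * G x) i j) = fun x => ∑ l, F x i l * G x l j := by
    funext x; simp [Matrix.mul_apply]
  rw [he]
  exact isSpline_sum _ _ fun l _ => (hF i l).mul (hG l j)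

lemma MS.constMulLeft {a b c k : ℕ} (A : Matrix (Fin a) (Fin b) ℝ)
    {G : (ι → ℝ) → Matrix (Fin b) (Fin c) ℝ} (hG : MS ι k G) :
    MS ι k (fun x => A * G x) := by
  intro i j
  have he : (fun x => (A * G x) i j) = fun x => ∑ l, A i l * G x l j := by
    funext x; simp [Matrix.mul_apply]
  rw [he]
  exact isSpline_sum _ _ fun l _ => (hG l j).const_mul (A i l)

lemma MS.addConst {a c k : ℕ} (C : Matrix (Fin a) (Fin c) ℝ)
    {G : (ι → ℝ) → Matrix (Fin a) (Fin c) ℝ} (hG : MS ι k G) :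
    MS ι k (fun x => G x + C) := by
  intro i j
  have he : (fun x => (G x + C) i j) = fun x => G x i j + C i j := by
    funext x; simp
  rw [he]
  exact (hG i j).add (isSpline_const k (C i j))

lemma MS.transpose {a c k : ℕ} {G : (ι → ℝ) → Matrix (Fin a) (Fin c) ℝ}
    (hG : MS ι k G) : MS ι k (fun x => (G x)ᵀ) := fun i j => hG j i

lemma MS.matRelu {a c k : ℕ} {G : (ι → ℝ) → Matrix (Fin a) (Fin c) ℝ}
    (hG : MS ι k G) : MS ι k (fun x => _root_.matRelu (G x)) := by
  intro i j
  have he : (fun x => _root_.matRelu (G x) i j) = fun x => relu (G x i j) := by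
    funext x; simp [_root_.matRelu]
  rw [he]
  exact (hG i j).relu

lemma MS.masked {c k : ℕ} {S : (ι → ℝ) → Matrix (Fin c) (Fin c) ℝ} (hS : MS ι k S) :
    MS ι k (fun x => (Matrix.of fun i j : Fin c =>
      if i ≤ j then relu (S x i j) else 0 : Matrix (Fin c) (Fin c) ℝ)) := by
  intro i j
  by_cases h : i ≤ j
  · have he : (fun x => (Matrix.of fun i j : Fin c =>
        if i ≤ j then relu (S x i j) else 0 : Matrix (Fin c) (Fin c) ℝ) i j)
        = fun x => relu (S x i j) := by
      funext x; simp [h]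
    rw [he]
    exact (hS i j).relu
  · have he : (fun x => (Matrix.of fun i j : Fin c =>
        if i ≤ j then relu (S x i j) else 0 : Matrix (Fin c) (Fin c) ℝ) i j)
        = fun _ => (0 : ℝ) := by
      funext x; simp [h]
    rw [he]
    exact isSpline_const k 0

lemma nn_ms : ∀ {a c : ℕ} {φ : (Fin a → ℝ) → Fin c → ℝ}, IsNN φ →
    ∀ {q k : ℕ} {G : (ι → ℝ) → Matrix (Fin a) (Fin q) ℝ}, MS ι k G →
      MS ι k (fun x => colwise φ (G x)) := by
  intro a c φ hφ
  induction hφ with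
  | @affine a b A c =>
    intro q k G hG i j
    have he : (fun x => colwise (fun v => A.mulVec v + c) (G x) i j)
        = fun x => (∑ l, A i l * G x l j) + c i := by
      funext x; simp [colwise, Matrix.mulVec, dotProduct]
    rw [he]
    exact (isSpline_sum _ _ fun l _ => (hG l j).const_mul (A i l)).add (isSpline_const k (c i))
  | @layer a b c A v g hg ih =>
    intro q k G hG
    have key : (fun x => colwise (fun u => g fun i => relu (A.mulVec u i + v i)) (G x))
        = fun x => colwise g
            (matRelu (A * G x + Matrix.of fun i (_ : Fin q) => v i)) := by
      funext x
      ext i j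
      simp [colwise, _root_.matRelu, Matrix.mul_apply, Matrix.mulVec, dotProduct]
    rw [key]
    exact ih (((hG.constMulLeft A).addConst _).matRelu)

lemma attention_ms {nn d m c k : ℕ}
    (AQ AK : Matrix (Fin d) (Fin nn) ℝ) (AV : Matrix (Fin m) (Fin nn) ℝ)
    (BQ BK : Matrix (Fin d) (Fin c) ℝ) (BV : Matrix (Fin m) (Fin c) ℝ)
    {G : (ι → ℝ) → Matrix (Fin nn) (Fin c) ℝ} (hG : MS ι k G) :
    MS ι (3 * k) (fun x => attention AQ AK AV BQ BK BV (G x)) := by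
  have h1 : MS ι k (fun x => AV * G x + BV) := (hG.constMulLeft AV).addConst BV
  have hK : MS ι k (fun x => (AK * G x + BK)ᵀ) := ((hG.constMulLeft AK).addConst BK).transpose
  have hQ : MS ι k (fun x => AQ * G x + BQ) := (hG.constMulLeft AQ).addConst BQ
  have hS : MS ι (k + k) (fun x => (AK * G x + BK)ᵀ * (AQ * G x + BQ)) := hK.matMul hQ
  have := (h1.matMul hS.matRelu).mono (show k + (k + k) ≤ 3 * k by omega)
  exact this

lemma maskedAttention_ms {nn d m c k : ℕ}
    (AQ AK : Matrix (Fin d) (Fin nn) ℝ) (AV : Matrix (Fin m) (Fin nn) ℝ)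
    (BQ BK : Matrix (Fin d) (Fin c) ℝ) (BV : Matrix (Fin m) (Fin c) ℝ)
    {G : (ι → ℝ) → Matrix (Fin nn) (Fin c) ℝ} (hG : MS ι k G) :
    MS ι (3 * k) (fun x => maskedAttention AQ AK AV BQ BK BV (G x)) := by
  have h1 : MS ι k (fun x => AV * G x + BV) := (hG.constMulLeft AV).addConst BV
  have hS : MS ι (k + k) (fun x => (AK * G x + BK)ᵀ * (AQ * G x + BQ)) :=
    (((hG.constMulLeft AK).addConst BK).transpose).matMul ((hG.constMulLeft AQ).addConst BQ)
  have := (h1.matMul hS.masked).mono (show k + (k + k) ≤ 3 * k by omega)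
  exact this

lemma encDecAttention_ms {nn rr d m c kE kB : ℕ}
    (AQ : Matrix (Fin d) (Fin rr) ℝ) (AK : Matrix (Fin d) (Fin nn) ℝ)
    (AV : Matrix (Fin m) (Fin nn) ℝ)
    (BQ BK : Matrix (Fin d) (Fin c) ℝ) (BV : Matrix (Fin m) (Fin c) ℝ)
    {E : (ι → ℝ) → Matrix (Fin nn) (Fin c) ℝ} {Bf : (ι → ℝ) → Matrix (Fin rr) (Fin c) ℝ}
    (hE : MS ι kE E) (hB : MS ι kB Bf) :
    MS ι (2 * kE + kB) (fun x => encDecAttention AQ AK AV BQ BK BV (E x) (Bf x)) := by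
  have h1 : MS ι kE (fun x => AV * E x + BV) := (hE.constMulLeft AV).addConst BV
  have hS : MS ι (kE + kB) (fun x => (AK * E x + BK)ᵀ * (AQ * Bf x + BQ)) :=
    (((hE.constMulLeft AK).addConst BK).transpose).matMul ((hB.constMulLeft AQ).addConst BQ)
  have := (h1.matMul hS.matRelu).mono (show kE + (kE + kB) ≤ 2 * kE + kB by omega)
  exact this

lemma mhAttention_ms {nn d m h c k : ℕ}
    (AQ AK : Fin h → Matrix (Fin d) (Fin nn) ℝ) (AV : Fin h → Matrix (Fin m) (Fin nn) ℝ)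
    (BQ BK : Fin h → Matrix (Fin d) (Fin c) ℝ) (BV : Fin h → Matrix (Fin m) (Fin c) ℝ)
    {G : (ι → ℝ) → Matrix (Fin nn) (Fin c) ℝ} (hG : MS ι k G) :
    MS ι (3 * k) (fun x => multiheadAttention AQ AK AV BQ BK BV (G x)) := by
  intro i j
  exact attention_ms (AQ (finProdFinEquiv.symm i).1) (AK (finProdFinEquiv.symm i).1)
    (AV (finProdFinEquiv.symm i).1) (BQ (finProdFinEquiv.symm i).1)
    (BK (finProdFinEquiv.symm i).1) (BV (finProdFinEquiv.symm i).1) hG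
    (finProdFinEquiv.symm i).2 j

lemma mhMaskedAttention_ms {nn d m h c k : ℕ}
    (AQ AK : Fin h → Matrix (Fin d) (Fin nn) ℝ) (AV : Fin h → Matrix (Fin m) (Fin nn) ℝ)
    (BQ BK : Fin h → Matrix (Fin d) (Fin c) ℝ) (BV : Fin h → Matrix (Fin m) (Fin c) ℝ)
    {G : (ι → ℝ) → Matrix (Fin nn) (Fin c) ℝ} (hG : MS ι k G) :
    MS ι (3 * k) (fun x => multiheadMaskedAttention AQ AK AV BQ BK BV (G x)) := by
  intro i j
  exact maskedAttention_ms (AQ (finProdFinEquiv.symm i).1) (AK (finProdFinEquiv.symm i).1)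
    (AV (finProdFinEquiv.symm i).1) (BQ (finProdFinEquiv.symm i).1)
    (BK (finProdFinEquiv.symm i).1) (BV (finProdFinEquiv.symm i).1) hG
    (finProdFinEquiv.symm i).2 j

lemma mhEncDecAttention_ms {nn rr d m h c kE kB : ℕ}
    (AQ : Fin h → Matrix (Fin d) (Fin rr) ℝ) (AK : Fin h → Matrix (Fin d) (Fin nn) ℝ)
    (AV : Fin h → Matrix (Fin m) (Fin nn) ℝ)
    (BQ BK : Fin h → Matrix (Fin d) (Fin c) ℝ) (BV : Fin h → Matrix (Fin m) (Fin c) ℝ)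
    {E : (ι → ℝ) → Matrix (Fin nn) (Fin c) ℝ} {Bf : (ι → ℝ) → Matrix (Fin rr) (Fin c) ℝ}
    (hE : MS ι kE E) (hB : MS ι kB Bf) :
    MS ι (2 * kE + kB) (fun x => multiheadEncDecAttention AQ AK AV BQ BK BV (E x) (Bf x)) := by
  intro i j
  exact encDecAttention_ms (AQ (finProdFinEquiv.symm i).1) (AK (finProdFinEquiv.symm i).1)
    (AV (finProdFinEquiv.symm i).1) (BQ (finProdFinEquiv.symm i).1)
    (BK (finProdFinEquiv.symm i).1) (BV (finProdFinEquiv.symm i).1) hE hB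
    (finProdFinEquiv.symm i).2 j

lemma encoderBlock_ms {nn rr p k : ℕ}
    {f : Matrix (Fin nn) (Fin p) ℝ → Matrix (Fin rr) (Fin p) ℝ} (hf : IsEncoderBlock f)
    {G : (ι → ℝ) → Matrix (Fin nn) (Fin p) ℝ} (hG : MS ι k G) :
    MS ι (3 * k) (fun x => f (G x)) := by
  obtain ⟨d, m, h, AQ, AK, AV, BQ, BK, BV, φ, hφ, rfl⟩ := hf
  exact nn_ms hφ (mhAttention_ms AQ AK AV BQ BK BV hG)

lemma encoder_ms {p : ℕ} : ∀ {nn rr s : ℕ}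
    {f : Matrix (Fin nn) (Fin p) ℝ → Matrix (Fin rr) (Fin p) ℝ}, IsEncoder s f →
    ∀ {k : ℕ} {G : (ι → ℝ) → Matrix (Fin nn) (Fin p) ℝ}, MS ι k G →
      MS ι (3 ^ s * k) (fun x => f (G x)) := by
  intro nn rr s f h
  induction h with
  | block f hf =>
    intro k G hG
    exact (encoderBlock_ms hf hG).mono (le_of_eq (by rw [pow_one]))
  | comp t f g hf hg ih =>
    intro k G hG
    exact (ih (encoderBlock_ms hf hG)).mono (le_of_eq (by ring))

/-- degree recursion for the encoder–decoder chain. -/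
def ddeg (kE : ℕ) : ℕ → ℕ
  | 0 => 1
  | t + 1 => 3 * ddeg kE t + 2 * kE

lemma ddeg_eq (s t : ℕ) : ddeg (3 ^ s) t = 3 ^ (t + s) + 3 ^ t - 3 ^ s := by
  induction t with
  | zero =>
    have h : 1 ≤ 3 ^ s := Nat.one_le_pow _ _ (by norm_num)
    simp only [ddeg, Nat.zero_add, pow_zero]
    omega
  | succ t ih =>
    have h1 : 3 ^ s ≤ 3 ^ (t + s) := Nat.pow_le_pow_right (by norm_num) (by omega)
    have e1 : 3 ^ (t + 1 + s) = 3 * 3 ^ (t + s) := by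
      rw [show t + 1 + s = (t + s) + 1 by omega, pow_succ]; ring
    have e2 : 3 ^ (t + 1) = 3 * 3 ^ t := by rw [pow_succ]; ring
    rw [ddeg, ih, e1, e2]
    omega

lemma chain_ms {n p e r : ℕ} {ε : Matrix (Fin n) (Fin p) ℝ → Matrix (Fin e) (Fin p) ℝ}
    {kE : ℕ}
    (hE : MS ((Fin n × Fin p) ⊕ (Fin r × Fin p)) kE
      (fun x => ε (Matrix.of fun a b => x (Sum.inl (a, b))))) :
    ∀ {q t : ℕ}
      {τ : Matrix (Fin n) (Fin p) ℝ → Matrix (Fin r) (Fin p) ℝ → Matrix (Fin q) (Fin p) ℝ},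
      IsEncDecChain ε t τ →
      MS ((Fin n × Fin p) ⊕ (Fin r × Fin p)) (ddeg kE t)
        (fun x => τ (Matrix.of fun a b => x (Sum.inl (a, b)))
                    (Matrix.of fun a b => x (Sum.inr (a, b)))) := by
  intro q t τ h
  induction h with
  | zero =>
    intro i j
    exact isSpline_coord 1 le_rfl (Sum.inr (i, j))
  | succ t τ hτ AQ₁ AK₁ AV₁ BQ₁ BK₁ BV₁ AQ₂ AK₂ AV₂ BQ₂ BK₂ BV₂ φ hφ ih =>
    have h1 := mhMaskedAttention_ms AQ₁ AK₁ AV₁ BQ₁ BK₁ BV₁ ih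
    have h2 := (mhEncDecAttention_ms AQ₂ AK₂ AV₂ BQ₂ BK₂ BV₂ hE h1).mono
      (show 2 * kE + 3 * ddeg kE t ≤ ddeg kE (t + 1) by rw [ddeg]; omega)
    exact nn_ms hφ h2

end MatrixSplineAux


/-- A ReLU-activated encoder–decoder with `s` layers of encoder blocks and `t` layers of
encoder–decoder blocks is a spline of degree `3^{t+s} + 3^t − 3^s` in the joint variables
`(X, Y)`. -/
theorem encoder_decoder_is_spline (n p e r n' s t : ℕ)
    (ε : Matrix (Fin n) (Fin p) ℝ → Matrix (Fin e) (Fin p) ℝ) (hε : IsEncoder s ε)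
    (τ : Matrix (Fin n) (Fin p) ℝ → Matrix (Fin r) (Fin p) ℝ → Matrix (Fin n') (Fin p) ℝ)
    (hτ : IsEncDecChain ε t τ) :
    IsPairSpline (3 ^ (t + s) + 3 ^ t - 3 ^ s) τ := by
  have hX : MS ((Fin n × Fin p) ⊕ (Fin r × Fin p)) 1
      (fun x => (Matrix.of fun a b => x (Sum.inl (a, b)) : Matrix (Fin n) (Fin p) ℝ)) :=
    fun i j => isSpline_coord 1 le_rfl (Sum.inl (i, j))
  have hE : MS ((Fin n × Fin p) ⊕ (Fin r × Fin p)) (3 ^ s)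
      (fun x => ε (Matrix.of fun a b => x (Sum.inl (a, b)))) :=
    (encoder_ms hε hX).mono (le_of_eq (by ring))
  have hT : MS ((Fin n × Fin p) ⊕ (Fin r × Fin p)) (3 ^ (t + s) + 3 ^ t - 3 ^ s)
      (fun x => τ (Matrix.of fun a b => x (Sum.inl (a, b)))
                  (Matrix.of fun a b => x (Sum.inr (a, b)))) :=
    (chain_ms hE hτ).mono (le_of_eq (ddeg_eq s t))
  exact hT
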